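/- arXiv:1708.06618 — 2 statements merged into one kernel-verified Lean document; each statement's English description precedes it below -/
import Mathlib

section
/- Let U be a unitary operator on a Hilbert space H and let Q be the orthogonal projection onto the fixed-point subspace {x ∈ H : Ux = x}. Then for all x, y ∈ H, lim_{N→∞} (1/N) ∑_{n=1}^N ⟨y, Uⁿx⟩ = ⟨y, Qx⟩. -/
/-! Mathlib's mean ergodic theorem gives `(1/N) ∑_{n<N} Uⁿ x → P x`, with `P` the orthogonal
projection onto the fixed points of `U`. Applying the continuous map `U`, which fixes `P x`, shifts
the range of summation to `1 ≤ n ≤ N`. The hypotheses on `Q` say that `Q x` is fixed and `x - Q x`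
is orthogonal to the fixed points, which characterises `Q x = P x`; pairing with `y` concludes. -/

open Filter Topology

theorem LinearIsometryEquiv.coe_pow {R E : Type*} [Semiring R] [SeminormedAddCommGroup E]
    [Module R E] (e : E ≃ₗᵢ[R] E) (n : ℕ) : ⇑(e ^ n) = e^[n] :=
  hom_coe_pow _ rfl (fun _ _ ↦ rfl) _ _

theorem birkhoffSum_comp_self_eq_sum_Icc {α M : Type*} [AddCommMonoid M] (f : α → α)
    (g : α → M) (n : ℕ) (x : α) :
    birkhoffSum f (g ∘ f) n x = ∑ k ∈ Finset.Icc 1 n, g (f^[k] x) := by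
  induction n with
  | zero => simp
  | succ n ih =>
    rw [birkhoffSum_succ, ih, Finset.sum_Icc_succ_top (by omega), Function.comp_apply,
      Function.iterate_succ_apply' f n x]

theorem ContinuousLinearMap.tendsto_average_iterate_Icc_orthogonalProjection
    {𝕜 E : Type*} [RCLike 𝕜] [NormedAddCommGroup E] [InnerProductSpace 𝕜 E] [CompleteSpace E]
    (f : E →L[𝕜] E) (hf : ‖f‖ ≤ 1) (x : E) :
    Tendsto (fun N : ℕ ↦ (N : 𝕜)⁻¹ • ∑ n ∈ Finset.Icc 1 N, f^[n] x) atTop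
      (𝓝 ((f.eqLocus (1 : E →L[𝕜] E)).orthogonalProjectionOnto x)) := by
  set P := (f.eqLocus (1 : E →L[𝕜] E)).orthogonalProjectionOnto x
  have hfP : f P = P := P.2
  have h := (f.continuous.tendsto (P : E)).comp
    (f.tendsto_birkhoffAverage_orthogonalProjection hf x)
  rw [hfP] at h
  refine h.congr fun N ↦ ?_
  rw [Function.comp_apply, map_birkhoffAverage 𝕜 𝕜, birkhoffAverage]
  exact congrArg _ (birkhoffSum_comp_self_eq_sum_Icc f id N x)

theorem mean_ergodic_inner_general
    {H : Type*} [NormedAddCommGroup H] [InnerProductSpace ℂ H] [CompleteSpace H]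
    (U : H ≃ₗᵢ[ℂ] H) (Q : H →L[ℂ] H)
    (hQfix : ∀ x : H, U (Q x) = Q x)
    (hQorth : ∀ x y : H, U y = y → (inner ℂ (x - Q x) y : ℂ) = 0)
    (x y : H) :
    Tendsto (fun N : ℕ => (1 / (N : ℂ)) * ∑ n ∈ Finset.Icc 1 N, (inner ℂ y ((U ^ n) x) : ℂ))
      atTop (nhds (inner ℂ y (Q x))) := by
  set f : H →L[ℂ] H := U.toLinearIsometry.toContinuousLinearMap
  have hQ : ((f.eqLocus (1 : H →L[ℂ] H)).orthogonalProjectionOnto x : H) = Q x :=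
    Submodule.eq_starProjection_of_mem_of_inner_eq_zero (hQfix x) (hQorth x)
  have h := tendsto_const_nhds (x := y) |>.inner (𝕜 := ℂ)
    (f.tendsto_average_iterate_Icc_orthogonalProjection
      U.toLinearIsometry.norm_toContinuousLinearMap_le x)
  rw [hQ] at h
  refine h.congr fun N ↦ ?_
  simp_rw [inner_smul_right, inner_sum, one_div, U.coe_pow]
  rfl

/-- Weak form of the von Neumann mean ergodic theorem. -/
theorem mean_ergodic_inner
    {H : Type*} [NormedAddCommGroup H] [InnerProductSpace ℂ H] [CompleteSpace H]
    (U : H ≃ₗᵢ[ℂ] H) (Q : H →L[ℂ] H)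
    (hQfix : ∀ x : H, U (Q x) = Q x)
    (hQid : ∀ x : H, U x = x → Q x = x)
    (hQorth : ∀ x y : H, U y = y → (inner ℂ (x - Q x) y : ℂ) = 0)
    (x y : H) :
    Tendsto (fun N : ℕ => (1 / (N : ℂ)) * ∑ n ∈ Finset.Icc 1 N, (inner ℂ y ((U ^ n) x) : ℂ))
      atTop (nhds (inner ℂ y (Q x))) :=
  mean_ergodic_inner_general U Q hQfix hQorth x y
end

section
/- Let H be a Hilbert space, U a unitary on H with fixed-point projection Q, and let v_n := c_n U^n x, where x ∈ H and (c_n) is a bounded sequence of non-negative reals such that c_n = ⟨y, U^n x⟩ ≥ 0 for some y ∈ H. If lim_{M→∞} (1/M) ∑_{h=1}^M |⟨x, U^h x⟩| = 0, then lim_{N→∞} (1/N) ∑_{n=1}^N c_n² = 0. -/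
open Filter

/-- Hilbert-space core of the "one implies two mixing" lemma: if the Cesàro
averages of `|⟨x, Uʰ x⟩|` tend to `0` and `cₙ = ⟨y, Uⁿ x⟩` is a bounded
sequence of non-negative reals, then `(1/N) ∑ cₙ² → 0`. -/
theorem cesaro_sq_tendsto_zero_of_correlations
    {H : Type*} [NormedAddCommGroup H] [InnerProductSpace ℂ H] [CompleteSpace H]
    (U : H ≃ₗᵢ[ℂ] H) (x y : H) (c : ℕ → ℝ) (C : ℝ)
    (hbdd : ∀ n, c n ≤ C) (hnonneg : ∀ n, 0 ≤ c n)
    (hc : ∀ n, 1 ≤ n → (inner ℂ y ((U ^ n) x) : ℂ) = (c n : ℂ))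
    (hcorr : Tendsto (fun M : ℕ => (1 / (M : ℝ)) * ∑ h ∈ Finset.Icc 1 M,
        ‖(inner ℂ x ((U ^ h) x) : ℂ)‖) atTop (nhds 0)) :
    Tendsto (fun N : ℕ => (1 / (N : ℝ)) * ∑ n ∈ Finset.Icc 1 N, (c n) ^ 2)
      atTop (nhds 0) := by
  classical
  set a : ℕ → ℝ := fun h => ‖(inner ℂ x ((U ^ h) x) : ℂ)‖ with ha
  have ha_nonneg : ∀ h, 0 ≤ a h := fun h => norm_nonneg _
  set v : ℕ → H := fun n => ((c n : ℂ)) • ((U ^ n) x) with hv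
  set S : ℕ → H := fun N => ∑ n ∈ Finset.Icc 1 N, v n with hS
  have hC : 0 ≤ C := le_trans (hnonneg 0) (hbdd 0)
  -- step A : inner products of the v's
  have hAle : ∀ n m : ℕ, n ≤ m →
      ‖(inner ℂ (v n) (v m) : ℂ)‖ = c n * c m * a (m - n) := by
    intro n m hnm
    have hm : (U ^ m) x = (U ^ n) ((U ^ (m - n)) x) := by
      have hUm : U ^ m = U ^ n * U ^ (m - n) := by
        rw [← pow_add, Nat.add_sub_cancel' hnm]
      rw [hUm, LinearIsometryEquiv.coe_mul, Function.comp_apply]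
    simp only [hv, inner_smul_left, inner_smul_right, hm,
      LinearIsometryEquiv.inner_map_map]
    rw [norm_mul, norm_mul]
    simp [Complex.norm_real, abs_of_nonneg (hnonneg n), abs_of_nonneg (hnonneg m), ha,
      mul_assoc]
    ring
  have hA : ∀ n m : ℕ, ‖(inner ℂ (v n) (v m) : ℂ)‖ ≤
      C ^ 2 * a (max n m - min n m) := by
    intro n m
    have key : ∀ n m : ℕ, n ≤ m → ‖(inner ℂ (v n) (v m) : ℂ)‖ ≤ C ^ 2 * a (m - n) := by
      intro n m h
      rw [hAle n m h]
      have := mul_le_mul (mul_le_mul (hbdd n) (hbdd m) (hnonneg m) hC)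
        (le_refl (a (m - n))) (ha_nonneg _) (by positivity)
      calc c n * c m * a (m - n) ≤ C * C * a (m-n) := this
        _ = C ^ 2 * a (m - n) := by ring
    rcases le_total n m with h | h
    · rw [max_eq_right h, min_eq_left h]; exact key n m h
    · rw [max_eq_left h, min_eq_right h, ← norm_inner_symm]; exact key m n h
  -- step B : Cauchy–Schwarz with y
  have hB : ∀ N, ∑ n ∈ Finset.Icc 1 N, (c n) ^ 2 ≤ ‖y‖ * ‖S N‖ := by
    intro N
    have h1 : ((∑ n ∈ Finset.Icc 1 N, (c n) ^ 2 : ℝ) : ℂ) = inner ℂ y (S N) := by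
      rw [hS, inner_sum]
      push_cast
      refine Finset.sum_congr rfl fun n hn => ?_
      rw [hv, inner_smul_right, hc n (Finset.mem_Icc.mp hn).1]
      ring
    have h2 : (∑ n ∈ Finset.Icc 1 N, (c n) ^ 2 : ℝ) = ‖(inner ℂ y (S N) : ℂ)‖ := by
      rw [← h1, Complex.norm_real, Real.norm_of_nonneg]
      exact Finset.sum_nonneg fun n _ => sq_nonneg _
    rw [h2]
    exact norm_inner_le_norm y (S N)
  -- step C : norm of S squared bounded by double sum
  have hCsum : ∀ N, ‖S N‖ ^ 2 ≤
      ∑ n ∈ Finset.Icc 1 N, ∑ m ∈ Finset.Icc 1 N, ‖(inner ℂ (v n) (v m) : ℂ)‖ := by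
    intro N
    have h1 : (‖S N‖ ^ 2 : ℝ) = Complex.re (inner ℂ (S N) (S N)) :=
      (inner_self_eq_norm_sq (𝕜 := ℂ) (S N)).symm
    rw [h1]
    have h2 : (inner ℂ (S N) (S N) : ℂ) =
        ∑ n ∈ Finset.Icc 1 N, ∑ m ∈ Finset.Icc 1 N, (inner ℂ (v n) (v m) : ℂ) := by
      rw [hS, sum_inner]
      exact Finset.sum_congr rfl fun n _ => inner_sum _ _ _
    rw [h2]
    calc Complex.re (∑ n ∈ Finset.Icc 1 N, ∑ m ∈ Finset.Icc 1 N, (inner ℂ (v n) (v m) : ℂ))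
        ≤ ‖∑ n ∈ Finset.Icc 1 N, ∑ m ∈ Finset.Icc 1 N, (inner ℂ (v n) (v m) : ℂ)‖ :=
          Complex.re_le_norm _
      _ ≤ ∑ n ∈ Finset.Icc 1 N, ‖∑ m ∈ Finset.Icc 1 N, (inner ℂ (v n) (v m) : ℂ)‖ :=
          norm_sum_le _ _
      _ ≤ ∑ n ∈ Finset.Icc 1 N, ∑ m ∈ Finset.Icc 1 N, ‖(inner ℂ (v n) (v m) : ℂ)‖ :=
          Finset.sum_le_sum fun n _ => norm_sum_le _ _
  -- step D : combinatorial bound on the double sum of a's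
  have hD : ∀ N, ∀ n ∈ Finset.Icc 1 N,
      ∑ m ∈ Finset.Icc 1 N, a (max n m - min n m) ≤
        a 0 + 2 * ∑ h ∈ Finset.Icc 1 N, a h := by
    intro N n hn
    obtain ⟨hn1, hnN⟩ := Finset.mem_Icc.mp hn
    have hsplit : Finset.Icc 1 N = Finset.Ico 1 n ∪ Finset.Icc n N := by
      ext m
      simp only [Finset.mem_Icc, Finset.mem_Ico, Finset.mem_union]
      omega
    have hdisj : Disjoint (Finset.Ico 1 n) (Finset.Icc n N) := by
      rw [Finset.disjoint_left]
      intro m hm hm'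
      exact absurd (Finset.mem_Icc.mp hm').1 (not_le.mpr (Finset.mem_Ico.mp hm).2)
    nth_rewrite 1 [hsplit]
    rw [Finset.sum_union hdisj]
    have hleft : ∑ m ∈ Finset.Ico 1 n, a (max n m - min n m) ≤
        ∑ h ∈ Finset.Icc 1 N, a h := by
      have h1 : ∀ m ∈ Finset.Ico 1 n, a (max n m - min n m) = a (n - m) := by
        intro m hm
        have := (Finset.mem_Ico.mp hm).2
        rw [max_eq_left this.le, min_eq_right this.le]
      rw [Finset.sum_congr rfl h1]
      have himg : ∑ m ∈ Finset.Ico 1 n, a (n - m) =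
          ∑ h ∈ (Finset.Ico 1 n).image (fun m => n - m), a h := by
        rw [Finset.sum_image]
        intro p hp q hq hpq
        have hp2 := (Finset.mem_Ico.mp hp).2
        have hq2 := (Finset.mem_Ico.mp hq).2
        simp only at hpq
        omega
      rw [himg]
      apply Finset.sum_le_sum_of_subset_of_nonneg
      · intro h hh
        obtain ⟨m, hm, rfl⟩ := Finset.mem_image.mp hh
        have := Finset.mem_Ico.mp hm
        exact Finset.mem_Icc.mpr ⟨by omega, by omega⟩
      · intro h _ _; exact ha_nonneg h
    have hright : ∑ m ∈ Finset.Icc n N, a (max n m - min n m) ≤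
        a 0 + ∑ h ∈ Finset.Icc 1 N, a h := by
      have h1 : ∀ m ∈ Finset.Icc n N, a (max n m - min n m) = a (m - n) := by
        intro m hm
        have := (Finset.mem_Icc.mp hm).1
        rw [max_eq_right this, min_eq_left this]
      rw [Finset.sum_congr rfl h1]
      have himg : ∑ m ∈ Finset.Icc n N, a (m - n) =
          ∑ h ∈ (Finset.Icc n N).image (fun m => m - n), a h := by
        rw [Finset.sum_image]
        intro p hp q hq hpq
        have hp1 := (Finset.mem_Icc.mp hp).1
        have hq1 := (Finset.mem_Icc.mp hq).1
        simp only at hpq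
        omega
      rw [himg]
      have hsub : (Finset.Icc n N).image (fun m => m - n) ⊆
          insert 0 (Finset.Icc 1 N) := by
        intro h hh
        obtain ⟨m, hm, rfl⟩ := Finset.mem_image.mp hh
        have := Finset.mem_Icc.mp hm
        rcases Nat.eq_zero_or_pos (m - n) with h0 | h0
        · rw [h0]; exact Finset.mem_insert_self _ _
        · exact Finset.mem_insert_of_mem (Finset.mem_Icc.mpr ⟨h0, by omega⟩)
      calc ∑ h ∈ (Finset.Icc n N).image (fun m => m - n), a h
          ≤ ∑ h ∈ insert 0 (Finset.Icc 1 N), a h :=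
            Finset.sum_le_sum_of_subset_of_nonneg hsub (fun h _ _ => ha_nonneg h)
        _ ≤ a 0 + ∑ h ∈ Finset.Icc 1 N, a h := by
            rw [Finset.sum_insert (by simp)]
    linarith
  -- combine C, A, D : ‖S N‖² ≤ C² N (a 0 + 2 ∑ a h)
  have hSN : ∀ N : ℕ, ‖S N‖ ^ 2 ≤
      C ^ 2 * N * (a 0 + 2 * ∑ h ∈ Finset.Icc 1 N, a h) := by
    intro N
    calc ‖S N‖ ^ 2
        ≤ ∑ n ∈ Finset.Icc 1 N, ∑ m ∈ Finset.Icc 1 N, ‖(inner ℂ (v n) (v m) : ℂ)‖ :=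
          hCsum N
      _ ≤ ∑ n ∈ Finset.Icc 1 N, ∑ m ∈ Finset.Icc 1 N,
            C ^ 2 * a (max n m - min n m) :=
          Finset.sum_le_sum fun n _ => Finset.sum_le_sum fun m _ => hA n m
      _ = ∑ n ∈ Finset.Icc 1 N, C ^ 2 * ∑ m ∈ Finset.Icc 1 N, a (max n m - min n m) := by
          simp [Finset.mul_sum]
      _ ≤ ∑ n ∈ Finset.Icc 1 N, C ^ 2 * (a 0 + 2 * ∑ h ∈ Finset.Icc 1 N, a h) :=
          Finset.sum_le_sum fun n hn => by
            have := hD N n hn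
            nlinarith [sq_nonneg C]
      _ = C ^ 2 * N * (a 0 + 2 * ∑ h ∈ Finset.Icc 1 N, a h) := by
          rw [Finset.sum_const, Nat.card_Icc]
          simp only [nsmul_eq_mul]
          push_cast
          ring
  -- define the majorant G and show f N ≤ sqrt (G N)
  set G : ℕ → ℝ := fun N =>
    ‖y‖ ^ 2 * (C ^ 2 * (a 0 * (1 / N) + 2 * ((1 / (N : ℝ)) * ∑ h ∈ Finset.Icc 1 N, a h)))
    with hG
  have hG_nonneg : ∀ N, 0 ≤ G N := by
    intro N
    have : 0 ≤ (1 / (N : ℝ)) := by positivity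
    have h2 : 0 ≤ (1 / (N : ℝ)) * ∑ h ∈ Finset.Icc 1 N, a h :=
      mul_nonneg this (Finset.sum_nonneg fun h _ => ha_nonneg h)
    have h3 : 0 ≤ a 0 * (1 / (N : ℝ)) := mul_nonneg (ha_nonneg 0) this
    positivity
  have hfG : ∀ N : ℕ, (1 / (N : ℝ)) * ∑ n ∈ Finset.Icc 1 N, (c n) ^ 2 ≤
      Real.sqrt (G N) := by
    intro N
    rcases Nat.eq_zero_or_pos N with rfl | hN
    · simp [Real.sqrt_nonneg]
    have hNpos : (0 : ℝ) < N := by exact_mod_cast hN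
    rw [Real.le_sqrt _ (hG_nonneg N)]
    · have hf_le : (1 / (N : ℝ)) * ∑ n ∈ Finset.Icc 1 N, (c n) ^ 2 ≤
          (1 / N) * (‖y‖ * ‖S N‖) := by
        apply mul_le_mul_of_nonneg_left (hB N) (by positivity)
      have hsq : ((1 / (N : ℝ)) * (‖y‖ * ‖S N‖)) ^ 2 ≤ G N := by
        have h1 : ((1 / (N : ℝ)) * (‖y‖ * ‖S N‖)) ^ 2 =
            ‖y‖ ^ 2 * ((1 / N) ^ 2 * ‖S N‖ ^ 2) := by ring
        rw [h1, hG]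
        have h2 : (1 / (N : ℝ)) ^ 2 * ‖S N‖ ^ 2 ≤
            (1 / N) ^ 2 * (C ^ 2 * N * (a 0 + 2 * ∑ h ∈ Finset.Icc 1 N, a h)) :=
          mul_le_mul_of_nonneg_left (hSN N) (by positivity)
        have h3 : (1 / (N : ℝ)) ^ 2 * (C ^ 2 * N * (a 0 + 2 * ∑ h ∈ Finset.Icc 1 N, a h)) =
            C ^ 2 * (a 0 * (1 / N) + 2 * ((1 / (N : ℝ)) * ∑ h ∈ Finset.Icc 1 N, a h)) := by
          field_simp
        have := h2.trans_eq h3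
        nlinarith [sq_nonneg ‖y‖]
      calc ((1 / (N : ℝ)) * ∑ n ∈ Finset.Icc 1 N, (c n) ^ 2) ^ 2
          ≤ ((1 / (N : ℝ)) * (‖y‖ * ‖S N‖)) ^ 2 := by
            apply pow_le_pow_left₀ _ hf_le
            exact mul_nonneg (by positivity)
              (Finset.sum_nonneg fun n _ => sq_nonneg _)
        _ ≤ G N := hsq
    · exact mul_nonneg (by positivity) (Finset.sum_nonneg fun n _ => sq_nonneg _)
  -- G tends to 0
  have hGzero : Tendsto G atTop (nhds 0) := by
    have h1 : Tendsto (fun N : ℕ => a 0 * (1 / (N : ℝ))) atTop (nhds 0) := by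
      have := tendsto_one_div_atTop_nhds_zero_nat (𝕜 := ℝ)
      simpa using this.const_mul (a 0)
    have h2 : Tendsto (fun N : ℕ =>
        a 0 * (1 / (N : ℝ)) + 2 * ((1 / (N : ℝ)) * ∑ h ∈ Finset.Icc 1 N, a h))
        atTop (nhds 0) := by
      have := h1.add (hcorr.const_mul 2)
      simpa using this
    have := (h2.const_mul (C ^ 2)).const_mul (‖y‖ ^ 2)
    simpa [hG, mul_assoc] using this
  -- squeeze
  have hsqrtG : Tendsto (fun N => Real.sqrt (G N)) atTop (nhds 0) := by
    have := (Real.continuous_sqrt.tendsto 0).comp hGzero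
    simpa [Function.comp_def] using this
  refine squeeze_zero (fun N => ?_) hfG hsqrtG
  exact mul_nonneg (by positivity) (Finset.sum_nonneg fun n _ => sq_nonneg _)
end
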